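/- Let G be a countable discrete group, X a locally compact Hausdorff space with a proper, cocompact G-action, c : X → [0,∞) a compactly supported continuous function with ∑_{h∈G} c(h⁻¹·x)² = 1 for every x ∈ X (a cut-off function), and π : C₀(X) → B(H) a nondegenerate covariant representation on the G-Hilbert space H. Then for every ξ ∈ H the family (π(h·c)² ξ)_{h∈G} is unconditionally summable in H with sum ξ; that is, ∑_{h∈G} π(h·c)² = 1 in the strong operator topology. -/

import Mathlib

/-!
The partial sums `∑_{h ∈ F} (h·c)²` take values in `[0, 1]`, so the operators
`π(∑_{h ∈ F} (h·c)²)` all have norm at most `1`. Properness of the action means that over a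
compact set only finitely many translates of `c` are nonzero, so for `φ ∈ C₀(X)` the series
`∑_h (h·c)² φ` converges to `φ` uniformly; applying `π` gives convergence on the vectors
`π(φ) v`. These span a dense subspace, and a uniformly bounded family of partial sums that
converges on a dense subspace converges everywhere.
-/

open scoped ZeroAtInfty
open Filter MeasureTheory Topology

noncomputable section

variable {G : Type*} [Group G] [Countable G] [TopologicalSpace G] [DiscreteTopology G]
variable {X : Type*} [TopologicalSpace X] [LocallyCompactSpace X] [T2Space X]
variable [MulAction G X] [ContinuousConstSMul G X]
variable {H : Type*} [NormedAddCommGroup H] [InnerProductSpace ℂ H] [CompleteSpace H]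
  [SecondCountableTopology H]

/-- The translation action of `G` on `C₀(X, ℂ)`: `(g • φ)(x) = φ(g⁻¹ • x)`. -/
def C0smul (g : G) (φ : C₀(X, ℂ)) : C₀(X, ℂ) where
  toFun := fun x => φ (g⁻¹ • x)
  continuous_toFun := φ.continuous.comp (continuous_const_smul g⁻¹)
  zero_at_infty' := φ.zero_at_infty'.comp
    ((Homeomorph.smul (g⁻¹ : G)).toCocompactMap.cocompact_tendsto')

/-- Conjugation `g(T) = u_g T u_g⁻¹` by the unitary representation `u`. -/
def conjU (u : G →* unitary (H →L[ℂ] H)) (g : G) (T : H →L[ℂ] H) : H →L[ℂ] H :=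
  (u g : H →L[ℂ] H) * T * ((u g⁻¹ : unitary (H →L[ℂ] H)) : H →L[ℂ] H)

/-- The Hilbert space `ℓ²(G, H)`. -/
abbrev l2GH (G H : Type*) [NormedAddCommGroup H] [InnerProductSpace ℂ H] : Type _ :=
  lp (fun _ : G => H) 2

open scoped CStarAlgebra

theorem hasSum_apply_of_dense_span {ι 𝕜 E F : Type*} [NontriviallyNormedField 𝕜]
    [NormedAddCommGroup E] [NormedSpace 𝕜 E] [NormedAddCommGroup F] [NormedSpace 𝕜 F]
    (T : ι → E →L[𝕜] F) (S : E →L[𝕜] F) {C : ℝ} (hT : ∀ s : Finset ι, ‖∑ i ∈ s, T i‖ ≤ C)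
    {D : Set E} (hD : Dense (Submodule.span 𝕜 D : Set E))
    (hS : ∀ v ∈ D, HasSum (fun i => T i v) (S v)) (v : E) :
    HasSum (fun i => T i v) (S v) := by
  let M : Submodule 𝕜 E :=
    { carrier := {v | HasSum (fun i => T i v) (S v)}
      add_mem' := fun hv hw => by simpa only [Set.mem_ofPred_eq, map_add] using hv.add hw
      zero_mem' := by simpa only [Set.mem_ofPred_eq, map_zero] using hasSum_zero
      smul_mem' := fun a v hv => by
        simpa only [Set.mem_ofPred_eq, map_smul] using hv.const_smul a }
  have hequi : Equicontinuous fun s : Finset ι => ⇑(∑ i ∈ s, T i) :=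
    (show (∃ C, ∀ s : Finset ι, ‖∑ i ∈ s, T i‖ ≤ C) ↔ _ from
      (NormedSpace.equicontinuous_TFAE fun s : Finset ι => ∑ i ∈ s, T i).out 5 1).mp ⟨C, hT⟩
  have hclosed : IsClosed (M : Set E) := by
    have := hequi.isClosed_setOfPred_tendsto (l := (SummationFilter.unconditional ι).filter)
      S.continuous
    simp only [sum_apply] at this
    exact this
  exact closure_minimal (Submodule.span_le.2 fun w hw => hS w hw) hclosed (hD v)

theorem Complex.exists_sum_sq_eq_ofReal_mem_Icc {ι : Type*} {f : ι → ℂ}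
    (hf_real : ∀ i, (f i).im = 0) (hf : HasSum (fun i => f i ^ 2) 1) (s : Finset ι) :
    ∃ t ∈ Set.Icc (0 : ℝ) 1, ∑ i ∈ s, f i ^ 2 = t := by
  have hsq (i : ι) : f i ^ 2 = (((f i).re ^ 2 : ℝ) : ℂ) := by
    rw [Complex.ofReal_pow, Complex.conj_eq_iff_re.1 (Complex.conj_eq_iff_im.2 (hf_real i))]
  have hre : HasSum (fun i => (f i).re ^ 2) 1 :=
    Complex.hasSum_ofReal.1 (by rw [Complex.ofReal_one]; simpa only [hsq] using hf)
  refine ⟨∑ i ∈ s, (f i).re ^ 2, ⟨Finset.sum_nonneg fun i _ => sq_nonneg _,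
    sum_le_hasSum s (fun i _ => sq_nonneg _) hre⟩, ?_⟩
  rw [Complex.ofReal_sum]
  exact Finset.sum_congr rfl fun i _ => hsq i

theorem ZeroAtInftyContinuousMap.sum_apply {α β ι : Type*} [TopologicalSpace α]
    [TopologicalSpace β] [AddCommMonoid β] [ContinuousAdd β] (s : Finset ι) (f : ι → C₀(α, β))
    (x : α) : (∑ i ∈ s, f i) x = ∑ i ∈ s, f i x := by
  induction s using Finset.cons_induction with
  | empty => rfl
  | cons i s hi ih => simp only [Finset.sum_cons, ZeroAtInftyContinuousMap.add_apply, ih]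

section CutOff

variable {Γ Y : Type*} [Group Γ] [TopologicalSpace Y] [MulAction Γ Y] [ContinuousConstSMul Γ Y]
  {c : C₀(Y, ℂ)}

@[simp] lemma C0smul_apply (g : Γ) (φ : C₀(Y, ℂ)) (x : Y) : C0smul g φ x = φ (g⁻¹ • x) := rfl

lemma sum_C0smul_mul_self_apply (s : Finset Γ) (x : Y) :
    (∑ h ∈ s, C0smul h c * C0smul h c) x = ∑ h ∈ s, c (h⁻¹ • x) ^ 2 := by
  simp only [ZeroAtInftyContinuousMap.sum_apply, ZeroAtInftyContinuousMap.mul_apply,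
    C0smul_apply, sq]

lemma norm_sum_C0smul_mul_self_le_one (hc_real : ∀ x, (c x).im = 0)
    (hc_sum : ∀ x : Y, HasSum (fun h : Γ => c (h⁻¹ • x) ^ 2) 1) (s : Finset Γ) :
    ‖∑ h ∈ s, C0smul h c * C0smul h c‖ ≤ 1 := by
  rw [← ZeroAtInftyContinuousMap.norm_toBCF_eq_norm,
    BoundedContinuousFunction.norm_le zero_le_one]
  intro x
  obtain ⟨t, ht, hst⟩ := Complex.exists_sum_sq_eq_ofReal_mem_Icc (fun h => hc_real _) (hc_sum x) s
  change ‖(∑ h ∈ s, C0smul h c * C0smul h c) x‖ ≤ 1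
  rw [sum_C0smul_mul_self_apply, hst, Complex.norm_real, Real.norm_of_nonneg ht.1]
  exact ht.2

lemma eventually_forall_sum_sq_eq_one [TopologicalSpace Γ] [DiscreteTopology Γ] [T2Space Y]
    [LocallyCompactSpace Y] [ProperSMul Γ Y] (hcs : HasCompactSupport c)
    (hc_sum : ∀ x : Y, HasSum (fun h : Γ => c (h⁻¹ • x) ^ 2) 1) {K : Set Y} (hK : IsCompact K) :
    ∀ᶠ s : Finset Γ in atTop, ∀ x ∈ K, ∑ h ∈ s, c (h⁻¹ • x) ^ 2 = 1 := by
  -- for a discrete group, proper means properly discontinuous: only finitely many `h`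
  -- move `tsupport c` to meet `K`
  have := properlyDiscontinuousSMul_iff_properSMul.2 ‹ProperSMul Γ Y›
  obtain ⟨s₀, hs₀⟩ := (finite_disjoint_inter_image (Γ := Γ) hcs hK).exists_finset_coe
  filter_upwards [eventually_ge_atTop s₀] with s hs x hx
  refine (hasSum_sum_of_ne_finset_zero fun h hh => ?_).unique (hc_sum x)
  by_contra hne
  have hmem : h⁻¹ • x ∈ tsupport c := subset_tsupport _ (ne_zero_pow two_ne_zero hne)
  refine hh (hs ?_)
  rw [← Finset.mem_coe, hs₀]
  exact ⟨x, ⟨h⁻¹ • x, hmem, smul_inv_smul h x⟩, hx⟩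

lemma hasSum_C0smul_mul_self_mul [TopologicalSpace Γ] [DiscreteTopology Γ] [T2Space Y]
    [LocallyCompactSpace Y] [ProperSMul Γ Y] (hcs : HasCompactSupport c)
    (hc_real : ∀ x, (c x).im = 0) (hc_sum : ∀ x : Y, HasSum (fun h : Γ => c (h⁻¹ • x) ^ 2) 1)
    (φ : C₀(Y, ℂ)) : HasSum (fun h : Γ => C0smul h c * C0smul h c * φ) φ := by
  rw [HasSum, ZeroAtInftyContinuousMap.tendsto_iff_tendstoUniformly, Metric.tendstoUniformly_iff]
  intro ε hε
  obtain ⟨K, hK, hφK⟩ := mem_cocompact.1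
    (φ.zero_at_infty'.eventually (Metric.ball_mem_nhds 0 hε))
  filter_upwards [eventually_forall_sum_sq_eq_one hcs hc_sum hK] with s hs x
  rw [← Finset.sum_mul, ZeroAtInftyContinuousMap.mul_apply, sum_C0smul_mul_self_apply,
    dist_eq_norm]
  by_cases hx : x ∈ K
  · rwa [hs x hx, one_mul, sub_self, norm_zero]
  obtain ⟨t, ht, hst⟩ := Complex.exists_sum_sq_eq_ofReal_mem_Icc (fun h => hc_real _) (hc_sum x) s
  have hφx : ‖φ x‖ < ε := mem_ball_zero_iff.1 (hφK hx)
  calc ‖φ x - (∑ h ∈ s, c (h⁻¹ • x) ^ 2) * φ x‖ = |1 - t| * ‖φ x‖ := by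
        rw [hst, ← one_sub_mul, norm_mul, ← Complex.ofReal_one, ← Complex.ofReal_sub,
          Complex.norm_real, Real.norm_eq_abs]
    _ ≤ 1 * ‖φ x‖ := by
        gcongr
        exact abs_le.2 ⟨by linarith [ht.2], by linarith [ht.1]⟩
    _ < ε := by rwa [one_mul]

end CutOff

theorem statement_11_general
    (π : C₀(X, ℂ) →⋆ₙₐ[ℂ] (H →L[ℂ] H))
    (hπnd : Dense (Submodule.span ℂ (Set.range fun p : C₀(X, ℂ) × H => π p.1 p.2) : Set H))
    (hproper : IsProperMap fun p : G × X => (p.1 • p.2, p.2))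
    (c : C₀(X, ℂ)) (hcs : HasCompactSupport (⇑c))
    (hc_real : ∀ x : X, (c x).im = 0)
    (hc_sum : ∀ x : X, HasSum (fun h : G => c (h⁻¹ • x) ^ 2) 1) :
    ∀ ξ : H, HasSum (fun h : G => π (C0smul h c) (π (C0smul h c) ξ)) ξ := by
  have : ProperSMul G X := ⟨hproper⟩
  refine hasSum_apply_of_dense_span (fun h => π (C0smul h c) * π (C0smul h c)) 1 (C := 1)
    (fun s => ?_) hπnd ?_
  · calc ‖∑ h ∈ s, π (C0smul h c) * π (C0smul h c)‖
          = ‖π (∑ h ∈ s, C0smul h c * C0smul h c)‖ := by simp only [map_sum, map_mul]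
      _ ≤ ‖∑ h ∈ s, C0smul h c * C0smul h c‖ := NonUnitalStarAlgHom.norm_apply_le π _
      _ ≤ 1 := norm_sum_C0smul_mul_self_le_one hc_real hc_sum s
  · rintro _ ⟨⟨φ, v⟩, rfl⟩
    have := ((hasSum_C0smul_mul_self_mul hcs hc_real hc_sum φ).map π (map_continuous π)).map
      (ContinuousLinearMap.apply ℂ H v) (ContinuousLinearMap.apply ℂ H v).continuous
    simpa only [Function.comp_def, map_mul, ContinuousLinearMap.apply_apply,
      mul_apply_eq_comp, one_apply_eq_self] using this

theorem statement_11
    (u : G →* unitary (H →L[ℂ] H))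
    (π : C₀(X, ℂ) →⋆ₙₐ[ℂ] (H →L[ℂ] H))
    (hπnd : Dense (Submodule.span ℂ (Set.range fun p : C₀(X, ℂ) × H => π p.1 p.2) : Set H))
    (hcov : ∀ (g : G) (φ : C₀(X, ℂ)),
      (u g : H →L[ℂ] H) * π φ * ((u g⁻¹ : unitary (H →L[ℂ] H)) : H →L[ℂ] H) = π (C0smul g φ))
    (hproper : IsProperMap fun p : G × X => (p.1 • p.2, p.2))
    (hcocompact : CompactSpace (Quotient (MulAction.orbitRel G X)))
    (c : C₀(X, ℂ)) (hcs : HasCompactSupport (⇑c))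
    (hc_real : ∀ x : X, (c x).im = 0) (hc_nonneg : ∀ x : X, 0 ≤ (c x).re)
    (hc_sum : ∀ x : X, HasSum (fun h : G => c (h⁻¹ • x) ^ 2) 1) :
    ∀ ξ : H, HasSum (fun h : G => π (C0smul h c) (π (C0smul h c) ξ)) ξ :=
  statement_11_general π hπnd hproper c hcs hc_real hc_sum

end
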